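/- arXiv:2602.15585 — 2 statements merged into one kernel-verified Lean document; each statement's English description precedes it below -/
import Mathlib

section
/- Let k = k(n) be natural numbers with k/(log n)^2 → ∞ and k/√n → 0, fix γ ∈ ℝ and a constant α > 1, and let m = m(n) satisfy √(log n)·(4·m·(log n)/(k^2·n) − 1) → γ as n → ∞. Then the threshold t* satisfies (t* − μ − k)/σ → γ/√2 as n → ∞. -/
open Filter Finset MeasureTheory

noncomputable section

/-- A graph on `Fin n` is identified with its edge set. -/
abbrev EdgeSet (n : ℕ) := Finset (Sym2 (Fin n))

/-- The non-diagonal (loopless) potential edges on `Fin n`. -/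
def potEdges (n : ℕ) : Finset (Sym2 (Fin n)) :=
  Finset.univ.filter (fun e => ¬ e.IsDiag)

/-- Graphs on `Fin n` with exactly `m` edges. -/
def nullGraphs (n m : ℕ) : Finset (EdgeSet n) :=
  (potEdges n).powersetCard m

/-- `N = n(n-1)/2`, the number of potential edges. -/
def bigN (n : ℕ) : ℕ := n * (n - 1) / 2

open Classical in
/-- Null model `P0 = G(n,m)`: the uniform distribution over graphs with `m` edges. -/
def P0 (n m : ℕ) (A : Set (EdgeSet n)) : ℝ :=
  (((nullGraphs n m).filter (fun G => G ∈ A)).card : ℝ) / ((nullGraphs n m).card : ℝ)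

/-- Potential edges incident to a vertex `v`. -/
def incEdges (n : ℕ) (v : Fin n) : Finset (Sym2 (Fin n)) :=
  (potEdges n).filter (fun e => v ∈ e)

/-- Normalizing constant `n·C(n-1,k)·C(N-k,m-k)` of the planted model. -/
def plantedDenom (n m k : ℕ) : ℝ :=
  (n : ℝ) * (Nat.choose (n - 1) k : ℝ) * (Nat.choose (bigN n - k) (m - k) : ℝ)

open Classical in
/-- Joint planted model over triples (hub `v`, star `S`, graph `S ∪ H`): the hub is
uniform, the star is a uniform `k`-set of edges incident to the hub, and `H` is a
uniform `(m-k)`-set of the remaining potential edges. -/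
def P1full (n m k : ℕ) (A : Set (Fin n × EdgeSet n × EdgeSet n)) : ℝ :=
  (∑ v : Fin n, ∑ S ∈ (incEdges n v).powersetCard k,
      ∑ H ∈ (potEdges n \ S).powersetCard (m - k),
        if (v, S, S ∪ H) ∈ A then (1 : ℝ) else 0) / plantedDenom n m k

/-- Planted model `P1(n,m,k)`: the marginal distribution of the graph. -/
def P1 (n m k : ℕ) (A : Set (EdgeSet n)) : ℝ :=
  P1full n m k {t | t.2.2 ∈ A}

open Classical in
/-- Expectation under the joint planted model. -/
def E1full (n m k : ℕ) (f : Fin n × EdgeSet n × EdgeSet n → ℝ) : ℝ :=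
  (∑ v : Fin n, ∑ S ∈ (incEdges n v).powersetCard k,
      ∑ H ∈ (potEdges n \ S).powersetCard (m - k), f (v, S, S ∪ H)) / plantedDenom n m k

open Classical in
/-- Degree of vertex `v` in the graph `G`. -/
def deg {n : ℕ} (G : EdgeSet n) (v : Fin n) : ℕ :=
  (G.filter (fun e => v ∈ e)).card

/-- Maximum degree of the graph `G`. -/
def maxDeg {n : ℕ} (G : EdgeSet n) : ℕ :=
  Finset.univ.sup (fun v => deg G v)

/-- Likelihood ratio `Λ(G) = [C(N,m)/(n·C(n-1,k)·C(N-k,m-k))]·Σ_i C(d_i,k)`. -/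
def LR (n m k : ℕ) (G : EdgeSet n) : ℝ :=
  ((Nat.choose (bigN n) m : ℝ) / plantedDenom n m k) *
    ∑ i : Fin n, (Nat.choose (deg G i) k : ℝ)

/-- Threshold `t* = 2m/n + √((2m/n)(1-m/N))·√(2 log n - (1/α) log log n)`. -/
def tstar (α : ℝ) (n m : ℕ) : ℝ :=
  2 * (m : ℝ) / (n : ℝ) +
    Real.sqrt (2 * (m : ℝ) / (n : ℝ) * (1 - (m : ℝ) / (bigN n : ℝ))) *
      Real.sqrt (2 * Real.log n - (1 / α) * Real.log (Real.log n))

/-- The standard normal cumulative distribution function `Φ`. -/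
def Phi (x : ℝ) : ℝ :=
  ∫ t in Set.Iic x, Real.exp (-t ^ 2 / 2) / Real.sqrt (2 * Real.pi)

/-- Total variation distance between two set functions on graphs. -/
def TVdist (n : ℕ) (P Q : Set (EdgeSet n) → ℝ) : ℝ :=
  ⨆ A : Set (EdgeSet n), |P A - Q A|

/-- Null mean degree `μ = (n-1)·(m/N)`. -/
def muN (n m : ℕ) : ℝ := ((n : ℝ) - 1) * ((m : ℝ) / (bigN n : ℝ))

/-- Null degree variance `σ² = (n-1)p(1-p)·(N/(N-1))·((N-(n-1))/(N-1))` with `p = m/N`. -/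
def sigSqN (n m : ℕ) : ℝ :=
  ((n : ℝ) - 1) * ((m : ℝ) / (bigN n : ℝ)) * (1 - (m : ℝ) / (bigN n : ℝ)) *
    ((bigN n : ℝ) / ((bigN n : ℝ) - 1)) *
      (((bigN n : ℝ) - ((n : ℝ) - 1)) / ((bigN n : ℝ) - 1))

/-- Null degree standard deviation `σ`. -/
def sigN (n m : ℕ) : ℝ := Real.sqrt (sigSqN n m)

/-- `a_n = kσ/μ`. -/
def aN (n m k : ℕ) : ℝ := (k : ℝ) * sigN n m / muN n m

/-- Hypergeometric(N,K,m) probability mass function. -/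
def hpmf (N K m d : ℕ) : ℝ :=
  ((Nat.choose K d : ℝ) * (Nat.choose (N - K) (m - d) : ℝ)) / (Nat.choose N m : ℝ)

/-- Mean of the Hypergeometric(N,K,m) distribution. -/
def hMean (N K m : ℕ) : ℝ := ∑ d ∈ Finset.range (m + 1), (d : ℝ) * hpmf N K m d

/-- Variance of the Hypergeometric(N,K,m) distribution. -/
def hVar (N K m : ℕ) : ℝ :=
  ∑ d ∈ Finset.range (m + 1), ((d : ℝ) - hMean N K m) ^ 2 * hpmf N K m d

/-- Moment generating function of the standardized hypergeometric `Y = (d-μ)/σ`. -/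
def hMgfY (N K m : ℕ) (t : ℝ) : ℝ :=
  ∑ d ∈ Finset.range (m + 1),
    hpmf N K m d * Real.exp (t * (((d : ℝ) - hMean N K m) / Real.sqrt (hVar N K m)))

/-- Cumulant generating function of the standardized hypergeometric. -/
def hCgfY (N K m : ℕ) (t : ℝ) : ℝ := Real.log (hMgfY N K m t)

open Classical in
/-- The Erdős–Rényi `G(n,p)` probability of an event. -/
def Pgnp (n : ℕ) (p : ℝ) (A : Set (EdgeSet n)) : ℝ :=
  ∑ G ∈ (potEdges n).powerset,
    (if G ∈ A then (1 : ℝ) else 0) * p ^ G.card * (1 - p) ^ ((potEdges n).card - G.card)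

open Classical in
/-- Leaves of the planted star with hub `v` and star edge set `S`. -/
def starLeaves {n : ℕ} (v : Fin n) (S : EdgeSet n) : Finset (Fin n) :=
  Finset.univ.filter (fun u => u ≠ v ∧ s(u, v) ∈ S)

open Classical in
/-- Expectation under the null model `G(n,m)`. -/
def E0 (n m : ℕ) (f : EdgeSet n → ℝ) : ℝ :=
  (∑ G ∈ nullGraphs n m, f G) / ((nullGraphs n m).card : ℝ)

open Classical in
/-- Conditional expectation under the null model `G(n,m)` given an event `A`. -/
def E0cond (n m : ℕ) (f : EdgeSet n → ℝ) (A : Set (EdgeSet n)) : ℝ :=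
  (∑ G ∈ (nullGraphs n m).filter (fun G => G ∈ A), f G) /
    (((nullGraphs n m).filter (fun G => G ∈ A)).card : ℝ)

open Classical in
/-- Tail probability `Q^{(a)}(Y ≥ t)` of the exponentially tilted standardized
hypergeometric distribution. -/
def hTiltTailProb (N K m : ℕ) (a t : ℝ) : ℝ :=
  (∑ d ∈ Finset.range (m + 1),
      (if t ≤ ((d : ℝ) - hMean N K m) / Real.sqrt (hVar N K m) then (1 : ℝ) else 0) *
        (hpmf N K m d *
          Real.exp (a * (((d : ℝ) - hMean N K m) / Real.sqrt (hVar N K m))))) /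
    hMgfY N K m a

/-!
With `L = log n`, `r = 4 m L / (k² n)`, `p = m / N`, `e = log L / (2 α L)` and `c` the finite
population correction, one has `μ = 2m/n = k² r / (2L)`, hence `t* - μ = k √q` with
`q = r (1 - p) (1 - e)` and `σ = k √(r (1 - p) c) / √(2L)`. The standardized threshold is therefore
`√2 · √L (√q - 1) / √(r (1 - p) c)`. The hypothesis says `√L (r - 1) → γ`, while `p` and `e` are
`o(1/√L)` (for `p` because `k = o(√n)`), so `√L (q - 1) → γ`, `√L (√q - 1) → γ/2` and `c → 1`.
-/

open Real

-- In the notation above: `p`, `r`, `e` and `c`.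
def edgeDensity (n m : ℕ) : ℝ := m / bigN n

def windowRatio (n m k : ℕ) : ℝ := 4 * m * log n / (k ^ 2 * n)

def logLogCorrection (α : ℝ) (n : ℕ) : ℝ := (1 / α) * log (log n) / (2 * log n)

def varCorrection (n : ℕ) : ℝ :=
  (bigN n / (bigN n - 1)) * ((bigN n - (n - 1)) / (bigN n - 1))

section Asymptotics

variable {ι : Type*} {l : Filter ι} {s x : ι → ℝ}

lemma tendsto_zero_of_tendsto_mul_of_tendsto_atTop {a : ℝ} (hs : Tendsto s l atTop)
    (h : Tendsto (fun i => s i * x i) l (nhds a)) : Tendsto x l (nhds 0) := by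
  refine (h.div_atTop hs).congr' ?_
  filter_upwards [hs.eventually_gt_atTop 0] with i hi
  field_simp

lemma tendsto_mul_sqrt_sub_one {γ : ℝ} (hs : Tendsto s l atTop)
    (h : Tendsto (fun i => s i * (x i - 1)) l (nhds γ)) :
    Tendsto (fun i => s i * (√(x i) - 1)) l (nhds (γ / 2)) := by
  have hx : Tendsto x l (nhds 1) := by
    simpa using (tendsto_zero_of_tendsto_mul_of_tendsto_atTop hs h).add_const 1
  have hden : Tendsto (fun i => √(x i) + 1) l (nhds 2) := by
    simpa [one_add_one_eq_two] using hx.sqrt.add_const 1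
  refine (h.div hden two_ne_zero).congr' ?_
  filter_upwards [hx.eventually (lt_mem_nhds zero_lt_one)] with i hi
  have hsq : √(x i) ^ 2 = x i := sq_sqrt hi.le
  rw [Pi.div_apply, div_eq_iff (by positivity)]
  linear_combination (-s i) * hsq

lemma tendsto_mul_mul_one_sub_mul_one_sub_sub_one {r p e : ι → ℝ} {γ : ℝ}
    (hs : Tendsto s l atTop) (hr : Tendsto (fun i => s i * (r i - 1)) l (nhds γ))
    (hp : Tendsto (fun i => s i * p i) l (nhds 0)) (he : Tendsto (fun i => s i * e i) l (nhds 0)) :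
    Tendsto (fun i => s i * (r i * (1 - p i) * (1 - e i) - 1)) l (nhds γ) := by
  have hp0 := tendsto_zero_of_tendsto_mul_of_tendsto_atTop hs hp
  have he0 := tendsto_zero_of_tendsto_mul_of_tendsto_atTop hs he
  have h := (((hr.mul (hp0.const_sub 1)).mul (he0.const_sub 1)).sub hp).sub he |>.add (hp.mul he0)
  simp only [sub_zero, mul_one, mul_zero, add_zero] at h
  refine h.congr fun i => ?_
  ring

lemma tendsto_log_div_sqrt_atTop : Tendsto (fun x => log x / √x) atTop (nhds 0) := by
  refine (isLittleO_log_rpow_atTop one_half_pos).tendsto_div_nhds_zero.congr fun x => ?_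
  rw [sqrt_eq_rpow]

end Asymptotics

lemma cast_bigN (n : ℕ) : (bigN n : ℝ) = n * (n - 1) / 2 := by
  rw [bigN, ← Nat.choose_two_right, Nat.cast_choose_two]

lemma muN_eq {n : ℕ} (hn : 1 < n) (m : ℕ) : muN n m = 2 * m / n := by
  have hn' : (1 : ℝ) < n := by exact_mod_cast hn
  have : (n : ℝ) - 1 ≠ 0 := by linarith
  rw [muN, cast_bigN]
  field_simp

lemma sigSqN_eq (n m : ℕ) :
    sigSqN n m = muN n m * (1 - edgeDensity n m) * varCorrection n := by
  rw [sigSqN, muN, edgeDensity, varCorrection]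
  ring

lemma muN_eq_windowRatio {n : ℕ} (hn : 1 < n) (m : ℕ) {k : ℕ} (hk : k ≠ 0) :
    muN n m = k ^ 2 * windowRatio n m k / (2 * log n) := by
  have hL : 0 < log n := log_pos (by exact_mod_cast hn)
  rw [muN_eq hn, windowRatio]
  field_simp
  ring

lemma two_mul_log_sub_eq (α : ℝ) {n : ℕ} (hn : 1 < n) :
    2 * log n - (1 / α) * log (log n) = 2 * log n * (1 - logLogCorrection α n) := by
  have hL : 0 < log n := log_pos (by exact_mod_cast hn)
  rw [logLogCorrection]
  field_simp

lemma standardized_tstar_eq {α : ℝ} {n m k : ℕ} (hn : 1 < n) (hk : k ≠ 0)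
    (he : logLogCorrection α n ≤ 1) :
    (tstar α n m - muN n m - k) / sigN n m =
      √2 * (√(log n) * (√(windowRatio n m k * (1 - edgeDensity n m) *
          (1 - logLogCorrection α n)) - 1)) /
        √(windowRatio n m k * (1 - edgeDensity n m) * varCorrection n) := by
  set r := windowRatio n m k
  set p := edgeDensity n m
  set e := logLogCorrection α n
  have hL : 0 < log n := log_pos (by exact_mod_cast hn)
  have hk0 : (0 : ℝ) < k := by positivity
  have hsig : sigN n m = k * √(r * (1 - p) * varCorrection n) / √(2 * log n) := by
    rw [sigN, sigSqN_eq, muN_eq_windowRatio hn m hk,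
      show (k : ℝ) ^ 2 * r / (2 * log n) * (1 - p) * varCorrection n
        = k ^ 2 * (r * (1 - p) * varCorrection n / (2 * log n)) by ring,
      sqrt_mul (by positivity), sqrt_sq hk0.le, sqrt_div' _ (by positivity), mul_div_assoc]
  have hdev : tstar α n m - muN n m = k * √(r * (1 - p) * (1 - e)) := by
    have hsplit : 2 * (m : ℝ) / n * (1 - m / bigN n) * (2 * log n - (1 / α) * log (log n))
        = k ^ 2 * (r * (1 - p) * (1 - e)) := by
      rw [← muN_eq hn, muN_eq_windowRatio hn m hk, two_mul_log_sub_eq α hn]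
      field_simp
      rfl
    rw [tstar, muN_eq hn, ← sqrt_mul' _ (by rw [two_mul_log_sub_eq α hn]; nlinarith), hsplit,
      sqrt_mul (by positivity), sqrt_sq hk0.le]
    ring
  rw [hdev, hsig, sqrt_mul zero_le_two, ← mul_sub_one, div_div_eq_mul_div, mul_assoc (k : ℝ),
    mul_div_mul_left _ _ hk0.ne']
  ring

lemma sqrt_log_mul_edgeDensity_eq {n : ℕ} (hn : 1 < n) (m : ℕ) {k : ℕ} (hk : k ≠ 0) :
    √(log n) * edgeDensity n m =
      windowRatio n m k * ((k : ℝ) / √n) ^ 2 / (2 * (1 - 1 / n) * √(log n)) := by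
  have hn' : (1 : ℝ) < n := by exact_mod_cast hn
  have hL : 0 < log n := log_pos hn'
  have hsL : √(log n) ^ 2 = log n := sq_sqrt hL.le
  rw [edgeDensity, windowRatio, cast_bigN, div_pow, sq_sqrt (by positivity)]
  field_simp
  rw [hsL]
  ring

lemma ne_zero_of_windowRatio_ne_zero {n m k : ℕ} (h : windowRatio n m k ≠ 0) : k ≠ 0 := by
  rintro rfl
  simp [windowRatio] at h

lemma tendsto_sqrt_log_natCast_atTop : Tendsto (fun n : ℕ => √(log n)) atTop atTop :=
  tendsto_sqrt_atTop.comp (tendsto_log_atTop.comp tendsto_natCast_atTop_atTop)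

lemma tendsto_sqrt_log_mul_edgeDensity {k m : ℕ → ℕ}
    (hr : Tendsto (fun n => windowRatio n (m n) (k n)) atTop (nhds 1))
    (hk : Tendsto (fun n : ℕ => (k n : ℝ) / √n) atTop (nhds 0)) :
    Tendsto (fun n : ℕ => √(log n) * edgeDensity n (m n)) atTop (nhds 0) := by
  have hden : Tendsto (fun n : ℕ => 2 * (1 - 1 / (n : ℝ)) * √(log n)) atTop atTop := by
    refine Tendsto.pos_mul_atTop two_pos ?_ tendsto_sqrt_log_natCast_atTop
    simpa using ((tendsto_const_div_atTop_nhds_zero_nat (1 : ℝ)).const_sub 1).const_mul 2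
  refine ((hr.mul (hk.pow 2)).div_atTop hden).congr' ?_
  filter_upwards [eventually_gt_atTop 1, hr.eventually (lt_mem_nhds zero_lt_one)] with n hn hrn
  exact (sqrt_log_mul_edgeDensity_eq hn (m n) (ne_zero_of_windowRatio_ne_zero hrn.ne')).symm

lemma tendsto_sqrt_log_mul_logLogCorrection (α : ℝ) :
    Tendsto (fun n : ℕ => √(log n) * logLogCorrection α n) atTop (nhds 0) := by
  have hL : Tendsto (fun n : ℕ => log n) atTop atTop :=
    tendsto_log_atTop.comp tendsto_natCast_atTop_atTop
  have h := (tendsto_log_div_sqrt_atTop.comp hL).const_mul (1 / α / 2)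
  rw [mul_zero] at h
  refine h.congr' ?_
  filter_upwards [hL.eventually_gt_atTop 0] with n hn
  have hsL : √(log n) ^ 2 = log n := sq_sqrt hn.le
  simp only [Function.comp_apply, logLogCorrection]
  field_simp
  rw [hsL]

lemma tendsto_bigN_atTop : Tendsto (fun n : ℕ => (bigN n : ℝ)) atTop atTop := by
  have hn1 : Tendsto (fun n : ℕ => (n : ℝ) + -1) atTop atTop :=
    tendsto_atTop_add_const_right _ _ tendsto_natCast_atTop_atTop
  have h := (tendsto_natCast_atTop_atTop.atTop_mul_atTop₀ hn1).atTop_div_const two_pos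
  refine h.congr fun n => ?_
  rw [cast_bigN, sub_eq_add_neg]

lemma varCorrection_eq {n : ℕ} (hn : 2 < n) :
    varCorrection n = (1 - 2 / n) / (1 - 1 / bigN n) ^ 2 := by
  have hn' : (2 : ℝ) < n := by exact_mod_cast hn
  have hN : (1 : ℝ) < bigN n := by rw [cast_bigN]; nlinarith
  have : (bigN n : ℝ) - 1 ≠ 0 := by linarith
  rw [varCorrection]
  field_simp
  rw [cast_bigN]
  ring

lemma tendsto_varCorrection : Tendsto varCorrection atTop (nhds 1) := by
  have hN : Tendsto (fun n : ℕ => (1 : ℝ) / bigN n) atTop (nhds 0) :=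
    tendsto_const_nhds.div_atTop tendsto_bigN_atTop
  have h := ((tendsto_const_div_atTop_nhds_zero_nat (2 : ℝ)).const_sub 1).div
    ((hN.const_sub 1).pow 2) (by norm_num)
  simp only [sub_zero, one_pow, div_one] at h
  refine h.congr' ?_
  filter_upwards [eventually_gt_atTop 2] with n hn
  exact (varCorrection_eq hn).symm

theorem tstar_standardized_limit_general (k m : ℕ → ℕ) (γ α : ℝ)
    (hk2 : Tendsto (fun n : ℕ => (k n : ℝ) / Real.sqrt n) atTop (nhds 0))
    (hm : Tendsto (fun n : ℕ =>
        Real.sqrt (Real.log n) *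
          (4 * (m n : ℝ) * Real.log n / ((k n : ℝ) ^ 2 * (n : ℝ)) - 1)) atTop (nhds γ)) :
    Tendsto (fun n : ℕ =>
        (tstar α n (m n) - muN n (m n) - (k n : ℝ)) / sigN n (m n)) atTop
      (nhds (γ / Real.sqrt 2)) := by
  have hs := tendsto_sqrt_log_natCast_atTop
  have hm : Tendsto (fun n : ℕ => √(log n) * (windowRatio n (m n) (k n) - 1)) atTop (nhds γ) := hm
  have hr : Tendsto (fun n => windowRatio n (m n) (k n)) atTop (nhds 1) := by
    simpa using (tendsto_zero_of_tendsto_mul_of_tendsto_atTop hs hm).add_const 1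
  have hp := tendsto_sqrt_log_mul_edgeDensity hr hk2
  have he := tendsto_sqrt_log_mul_logLogCorrection α
  have hq := tendsto_mul_sqrt_sub_one hs (tendsto_mul_mul_one_sub_mul_one_sub_sub_one hs hm hp he)
  have hσ : Tendsto (fun n => √(windowRatio n (m n) (k n) * (1 - edgeDensity n (m n)) *
      varCorrection n)) atTop (nhds 1) := by
    simpa using ((hr.mul ((tendsto_zero_of_tendsto_mul_of_tendsto_atTop hs hp).const_sub 1)).mul
      tendsto_varCorrection).sqrt
  have hlim := (hq.const_mul √2).div hσ one_ne_zero
  rw [show √2 * (γ / 2) / 1 = γ / √2 by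
    field_simp; rw [sq_sqrt zero_le_two]; ring] at hlim
  refine hlim.congr' ?_
  filter_upwards [eventually_gt_atTop 1, hr.eventually (lt_mem_nhds zero_lt_one),
    (tendsto_zero_of_tendsto_mul_of_tendsto_atTop hs he).eventually (gt_mem_nhds zero_lt_one)]
    with n hn hrn hen
  exact (standardized_tstar_eq hn (ne_zero_of_windowRatio_ne_zero hrn.ne') hen.le).symm

/-- In the critical window, the threshold `t*` satisfies
`(t* - μ - k)/σ → γ/√2`. -/
theorem tstar_standardized_limit (k m : ℕ → ℕ) (γ α : ℝ) (hα : 1 < α)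
    (hk1 : Tendsto (fun n : ℕ => (k n : ℝ) / (Real.log n) ^ 2) atTop atTop)
    (hk2 : Tendsto (fun n : ℕ => (k n : ℝ) / Real.sqrt n) atTop (nhds 0))
    (hm : Tendsto (fun n : ℕ =>
        Real.sqrt (Real.log n) *
          (4 * (m n : ℝ) * Real.log n / ((k n : ℝ) ^ 2 * (n : ℝ)) - 1)) atTop (nhds γ)) :
    Tendsto (fun n : ℕ =>
        (tstar α n (m n) - muN n (m n) - (k n : ℝ)) / sigN n (m n)) atTop
      (nhds (γ / Real.sqrt 2)) :=
  tstar_standardized_limit_general k m γ α hk2 hm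
end
end

section
/- For all natural numbers N, K, m with 0 ≤ K ≤ N and 0 ≤ m ≤ N, every complex root of the polynomial g(z) = Σ_{d=0}^{m} C(K,d)·C(N−K,m−d)·z^d (the probability generating function of the Hypergeometric(N,K,m) distribution multiplied by C(N,m)) is real; that is, the probability generating function of a hypergeometric distribution is a real-rooted polynomial. -/
open Filter Finset MeasureTheory

noncomputable section

/-! Write `M = N - K`, `j = K + M - m` and `g(z) = ∑_d C(K,d) C(M,m-d) z^d`. Reversing
`(X + w + 1)^K (X + w)^M` shows that the `j`-th Taylor coefficient of `(X + 1)^K X^M` at `w` is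
`∑_d C(K,d) C(M,m-d) (w+1)^d w^(m-d)`, which is `w^m g(z)` when `w + 1 = w z`. So a root `z ≠ 1`
of `g` yields the root `w = 1/(z-1)` of the `j`-th derivative of `(X + 1)^K X^M`. That polynomial
has only real roots, and by Rolle's theorem so have all its derivatives; hence `w` is real, and
so is `z = 1 + 1/w`. Finally `z = 1` is not a root, as `g(1) = C(K+M, m)` by Vandermonde. -/

open Polynomial

namespace Polynomial

theorem Splits.derivative_real {p : ℝ[X]} (hp : p.Splits) : (derivative p).Splits := by
  rw [splits_iff_card_roots] at hp ⊢
  have hrolle := card_roots_le_derivative p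
  have hcard := card_roots' (derivative p)
  have hdeg := natDegree_derivative_le p
  omega

theorem Splits.iterate_derivative_real {p : ℝ[X]} (hp : p.Splits) (k : ℕ) :
    (derivative^[k] p).Splits := by
  induction k with
  | zero => exact hp
  | succ k ih =>
    rw [Function.iterate_succ_apply']
    exact ih.derivative_real

theorem iterate_derivative_ne_zero {R : Type*} [Semiring R] [CharZero R] [NoZeroDivisors R]
    {p : R[X]} (hp : p ≠ 0) {k : ℕ} (hk : k ≤ p.natDegree) : derivative^[k] p ≠ 0 := by
  intro h
  have hcoeff := congrArg (coeff · (p.natDegree - k)) h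
  simp only [coeff_iterate_derivative, Nat.sub_add_cancel hk, coeff_zero, nsmul_eq_mul] at hcoeff
  exact mul_ne_zero (by exact_mod_cast mt Nat.descFactorial_eq_zero_iff_lt.mp (by omega))
    (leadingCoeff_ne_zero.mpr hp) hcoeff

theorem eval_iterate_derivative {R : Type*} [Semiring R] (p : R[X]) (k : ℕ) (r : R) :
    (derivative^[k] p).eval r = k.factorial * (taylor r p).coeff k := by
  rw [taylor_coeff, ← factorial_smul_hasseDeriv]
  simp

theorem coeff_reverse_X_add_C_pow {R : Type*} [Semiring R] [Nontrivial R] (c : R)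
    (n k : ℕ) : ((X + C c) ^ n).reverse.coeff k = c ^ k * n.choose k := by
  rw [coeff_reverse, natDegree_pow_X_add_C, coeff_X_add_C_pow]
  rcases le_or_gt k n with hk | hk
  · rw [revAt_le hk, Nat.sub_sub_self hk, Nat.choose_symm hk]
  · simp [revAt_eq_self_of_lt hk, Nat.choose_eq_zero_of_lt hk]

theorem taylor_coeff_X_add_one_pow_mul_X_pow {R : Type*} [CommSemiring R] [Nontrivial R]
    (K M m : ℕ) (hm : m ≤ K + M) (w : R) :
    (taylor w ((X + C 1) ^ K * X ^ M)).coeff (K + M - m) =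
      ∑ d ∈ range (m + 1),
        (K.choose d * M.choose (m - d) : R) * ((w + 1) ^ d * w ^ (m - d)) := by
  have htaylor : taylor w ((X + C 1) ^ K * X ^ M) = (X + C (w + 1)) ^ K * (X + C w) ^ M := by
    simp only [taylor_mul, taylor_pow, map_add, taylor_X, taylor_C]
    ring
  have hlc : ((X + C (w + 1)) ^ K).leadingCoeff * ((X + C w) ^ M).leadingCoeff ≠ 0 := by
    rw [((monic_X_add_C _).pow K).leadingCoeff, ((monic_X_add_C _).pow M).leadingCoeff, one_mul]
    exact one_ne_zero
  have hdeg : ((X + C (w + 1)) ^ K * (X + C w) ^ M).natDegree = K + M := by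
    rw [natDegree_mul' hlc, natDegree_pow_X_add_C, natDegree_pow_X_add_C]
  rw [htaylor, ← revAt_le hm, ← hdeg, ← coeff_reverse, reverse_mul hlc, coeff_mul,
    Nat.sum_antidiagonal_eq_sum_range_succ_mk]
  refine Finset.sum_congr rfl fun d _ => ?_
  rw [coeff_reverse_X_add_C_pow, coeff_reverse_X_add_C_pow]
  ring

theorem eval_iterate_derivative_X_add_one_pow_mul_X_pow {R : Type*} [CommSemiring R]
    [Nontrivial R] (K M m : ℕ) (hm : m ≤ K + M) {w z : R} (hwz : w + 1 = w * z) :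
    (derivative^[K + M - m] ((X + C 1) ^ K * X ^ M)).eval w =
      (K + M - m).factorial * w ^ m *
        ∑ d ∈ range (m + 1), (K.choose d * M.choose (m - d) : R) * z ^ d := by
  rw [eval_iterate_derivative, taylor_coeff_X_add_one_pow_mul_X_pow K M m hm, mul_assoc]
  congr 1
  rw [mul_sum]
  refine Finset.sum_congr rfl fun d hd => ?_
  rw [hwz, mul_pow, ← pow_sub_mul_pow w (mem_range_succ_iff.mp hd)]
  ring

theorem im_eq_zero_of_isRoot_iterate_derivative_X_add_one_pow_mul_X_pow {K M k : ℕ}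
    (hk : k ≤ K + M) {w : ℂ} (hw : (derivative^[k] ((X + C 1) ^ K * X ^ M)).IsRoot w) :
    w.im = 0 := by
  set P : ℝ[X] := (X + C 1) ^ K * X ^ M
  have hP : P.Monic := ((monic_X_add_C 1).pow K).mul (monic_X_pow M)
  have hPdeg : P.natDegree = K + M := by
    rw [((monic_X_add_C 1).pow K).natDegree_mul (monic_X_pow M), natDegree_pow_X_add_C,
      natDegree_X_pow]
  have hmap : P.map (algebraMap ℝ ℂ) = (X + C 1) ^ K * X ^ M := by simp [P]
  rw [← hmap, iterate_derivative_map] at hw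
  have hsplits : (derivative^[k] P).Splits :=
    (((Splits.X_add_C 1).pow K).mul (Splits.X_pow M)).iterate_derivative_real k
  obtain ⟨x, rfl⟩ :=
    hsplits.mem_range_of_isRoot (iterate_derivative_ne_zero hP.ne_zero (by omega)) hw
  exact Complex.ofReal_im x

end Polynomial

theorem Nat.sum_range_choose_mul_choose_sub (K M m : ℕ) :
    ∑ d ∈ range (m + 1), K.choose d * M.choose (m - d) = (K + M).choose m := by
  rw [Nat.add_choose_eq, Nat.sum_antidiagonal_eq_sum_range_succ_mk]

theorem hypergeometric_pgf_real_rooted_general (N K m : ℕ) (hm : m ≤ N)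
    (z : ℂ)
    (hz : ∑ d ∈ Finset.range (m + 1),
        ((Nat.choose K d : ℂ) * (Nat.choose (N - K) (m - d) : ℂ)) * z ^ d = 0) :
    z.im = 0 := by
  set M := N - K
  have hmKM : m ≤ K + M := by omega
  have hz1 : z ≠ 1 := by
    rintro rfl
    have hvandermonde : (((K + M).choose m : ℕ) : ℂ) = 0 := by
      rw [← Nat.sum_range_choose_mul_choose_sub, ← hz]
      push_cast
      simp only [one_pow, mul_one]
    exact (Nat.choose_pos hmKM).ne' (by exact_mod_cast hvandermonde)
  set w := (z - 1)⁻¹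
  have hzw : z = 1 + w⁻¹ := by rw [inv_inv, add_sub_cancel]
  have hwz : w + 1 = w * z := by
    rw [hzw, mul_add, mul_one, mul_inv_cancel₀ (inv_ne_zero (sub_ne_zero.mpr hz1))]
  have hroot : (derivative^[K + M - m] ((X + C 1) ^ K * X ^ M)).IsRoot w := by
    rw [IsRoot, eval_iterate_derivative_X_add_one_pow_mul_X_pow K M m hmKM hwz, hz, mul_zero]
  have hw_real := im_eq_zero_of_isRoot_iterate_derivative_X_add_one_pow_mul_X_pow (by omega) hroot
  rw [hzw, Complex.add_im, Complex.inv_im, hw_real]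
  simp

/-- The probability generating function of a hypergeometric
distribution (times `C(N,m)`) is real rooted: every complex root of
`z ↦ Σ_{d=0}^m C(K,d)·C(N-K,m-d)·z^d` is real. -/
theorem hypergeometric_pgf_real_rooted (N K m : ℕ) (hK : K ≤ N) (hm : m ≤ N)
    (z : ℂ)
    (hz : ∑ d ∈ Finset.range (m + 1),
        ((Nat.choose K d : ℂ) * (Nat.choose (N - K) (m - d) : ℂ)) * z ^ d = 0) :
    z.im = 0 :=
  hypergeometric_pgf_real_rooted_general N K m hm z hz
end
end
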